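/- Let M be an n×n matrix over the superboolean semiring that is nonsingular (i.e., its permanent equals 1). Then M has a row with exactly one entry equal to 1 and all other entries equal to 0 (an n-marker). -/

import Mathlib

/-- The superboolean semiring `SB = {0, 1, 1^ν}`. -/
inductive SB : Type
  | zero | one | nu
deriving DecidableEq

instance instFintypeSB : Fintype SB where
  elems := ⟨↑[SB.zero, SB.one, SB.nu], by decide⟩
  complete := by intro x; cases x <;> decide

namespace SB

def add : SB → SB → SB
  | zero, x => x
  | x, zero => x
  | _, _ => nu

def mul : SB → SB → SB
  | zero, _ => zero
  | _, zero => zero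
  | one, x => x
  | x, one => x
  | nu, nu => nu

instance : Zero SB := ⟨zero⟩
instance : One SB := ⟨one⟩
instance : Add SB := ⟨add⟩
instance : Mul SB := ⟨mul⟩

instance : CommSemiring SB where
  add_assoc := by decide
  zero_add := by decide
  add_zero := by decide
  add_comm := by decide
  mul_assoc := by decide
  one_mul := by decide
  mul_one := by decide
  zero_mul := by decide
  mul_zero := by decide
  left_distrib := by decide
  right_distrib := by decide
  mul_comm := by decide
  nsmul := nsmulRec

end SB

/-!
The permanent `∑_σ ∏_i m_{i,σ(i)}` equals `1` exactly when one permutation `σ` contributes `1` and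
every other contributes `0`, since `1` is neither a proper sum nor a proper product in `SB`. So
`m_{i,σ(i)} = 1` for all `i`. If no row were a marker, every row `i` would have a nonzero entry
off `σ(i)`, say at `g(i)`. The map `σ⁻¹ ∘ g` has no fixed points, and on its periodic points it
permutes a nonempty set; following it there and `σ` elsewhere is a second permutation whose
product is nonzero, a contradiction.
-/

namespace SB

instance : Nontrivial SB := ⟨⟨0, 1, by decide⟩⟩

instance : NoZeroDivisors SB := ⟨by intro a b; revert a b; decide⟩

instance : Subsingleton SBˣ :=
  Subsingleton.units_of_isUnit fun a ha ↦ by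
    obtain ⟨b, hab⟩ := ha.exists_right_inv
    clear ha; revert a b; decide

instance : Subsingleton (AddUnits SB) :=
  Subsingleton.addUnits_of_isAddUnit fun a ha ↦ by
    obtain ⟨b, hab⟩ := ha.exists_neg
    clear ha; revert a b; decide

theorem add_eq_one {a b : SB} : a + b = 1 ↔ a = 1 ∧ b = 0 ∨ a = 0 ∧ b = 1 := by
  revert a b; decide

theorem sum_eq_one_iff {α : Type*} {s : Finset α} {f : α → SB} :
    ∑ x ∈ s, f x = 1 ↔ ∃ a ∈ s, f a = 1 ∧ ∀ b ∈ s, b ≠ a → f b = 0 := by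
  refine ⟨fun h ↦ ?_, fun ⟨a, ha, ha1, h0⟩ ↦ Finset.sum_eq_single_of_mem a ha h0 ▸ ha1⟩
  induction s using Finset.cons_induction with
  | empty => simp at h
  | cons a s has ih =>
    rw [Finset.sum_cons, add_eq_one] at h
    rcases h with ⟨ha, hs⟩ | ⟨ha, hs⟩
    · refine ⟨a, Finset.mem_cons_self a s, ha, fun b hb hba ↦ ?_⟩
      exact Finset.sum_eq_zero_iff.mp hs b ((Finset.mem_cons.mp hb).resolve_left hba)
    · obtain ⟨c, hc, hc1, hc0⟩ := ih hs
      refine ⟨c, Finset.mem_cons_of_mem hc, hc1, fun b hb hbc ↦ ?_⟩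
      rcases Finset.mem_cons.mp hb with rfl | hb
      exacts [ha, hc0 b hb hbc]

end SB

namespace Function

variable {α : Type*}

theorem periodicPts_nonempty [Finite α] [Nonempty α] (f : α → α) : (periodicPts f).Nonempty := by
  let x : α := Classical.arbitrary α
  obtain ⟨m, n, hmn, hx⟩ := Set.finite_univ.exists_lt_map_eq_of_forall_mem
    (f := fun k : ℕ ↦ f^[k] x) fun _ ↦ Set.mem_univ _
  refine ⟨f^[m] x, mk_mem_periodicPts (Nat.sub_pos_of_lt hmn) ?_⟩
  change f^[n - m] (f^[m] x) = f^[m] x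
  rw [← iterate_add_apply, Nat.sub_add_cancel hmn.le, ← hx]

theorem exists_perm_ne_one_forall_eq_or_eq [Finite α] [Nonempty α] {f : α → α}
    (hf : ∀ x, f x ≠ x) : ∃ τ : Equiv.Perm α, τ ≠ 1 ∧ ∀ x, τ x = f x ∨ τ x = x := by
  classical
  let τ := Equiv.Perm.ofSubtype ((bijOn_periodicPts f).equiv f)
  have hτ : ∀ x ∈ periodicPts f, τ x = f x := fun x hx ↦
    Equiv.Perm.ofSubtype_apply_of_mem _ hx
  refine ⟨τ, fun h ↦ ?_, fun x ↦ ?_⟩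
  · obtain ⟨x, hx⟩ := periodicPts_nonempty f
    exact hf x (by rw [← hτ x hx, h, Equiv.Perm.one_apply])
  · by_cases hx : x ∈ periodicPts f
    · exact .inl (hτ x hx)
    · exact .inr (Equiv.Perm.ofSubtype_apply_of_not_mem _ hx)

end Function

theorem Matrix.exists_perm_ne_forall_apply_ne_zero {ι R : Type*} [Finite ι] [Nonempty ι] [Zero R]
    (M : Matrix ι ι R) (σ : Equiv.Perm ι) (hσ : ∀ i, M i (σ i) ≠ 0)
    (hrow : ∀ i, ∃ j, j ≠ σ i ∧ M i j ≠ 0) : ∃ π ≠ σ, ∀ i, M i (π i) ≠ 0 := by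
  choose g hgσ hg using hrow
  obtain ⟨τ, hτ1, hτ⟩ := Function.exists_perm_ne_one_forall_eq_or_eq (f := σ.symm ∘ g)
    fun i h ↦ hgσ i (σ.symm_apply_eq.mp h)
  refine ⟨σ * τ, mul_ne_left.mpr hτ1, fun i ↦ ?_⟩
  rcases hτ i with h | h <;> rw [Equiv.Perm.mul_apply, h]
  exacts [by simpa using hg i, hσ i]

/-- If an `n × n` matrix over the superboolean semiring is nonsingular (its permanent,
`∑_{σ ∈ S_n} ∏_i m_{i,σ(i)}`, equals `1`), then it has an `n`-marker: a row with exactly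
one entry equal to `1` and all other entries equal to `0`. -/
theorem sb_nonsingular_has_marker (n : ℕ) (hn : 0 < n) (M : Matrix (Fin n) (Fin n) SB)
    (hM : ∑ σ : Equiv.Perm (Fin n), ∏ i : Fin n, M i (σ i) = 1) :
    ∃ i : Fin n, ∃ j : Fin n, M i j = 1 ∧ ∀ j' : Fin n, j' ≠ j → M i j' = 0 := by
  obtain ⟨σ, -, hσ, hothers⟩ := SB.sum_eq_one_iff.mp hM
  have hdiag : ∀ i, M i (σ i) = 1 := fun i ↦ Finset.prod_eq_one_iff.mp hσ i (Finset.mem_univ i)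
  by_contra! hno
  have : Nonempty (Fin n) := ⟨⟨0, hn⟩⟩
  obtain ⟨π, hπσ, hπ⟩ := M.exists_perm_ne_forall_apply_ne_zero σ
    (fun i ↦ by simp [hdiag i]) fun i ↦ hno i (σ i) (hdiag i)
  exact Finset.prod_ne_zero_iff.mpr (fun i _ ↦ hπ i) (hothers π (Finset.mem_univ π) hπσ)
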